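/- Let α > 0, f ≥ 0, and let X, Y be two Leray solutions of the forced inviscid DN model on [0, ∞) with X_n(t) ≥ 0 and Y_n(t) ≥ 0 for all n ≥ 1, t ≥ 0, and with X_n(0) = Y_n(0) for all n ≥ 1. Then X_n(t) = Y_n(t) for all n ≥ 1 and t ≥ 0; i.e., non-negative Leray solutions of the DN model are unique. -/

import Mathlib

/-!
Write `k = 2^α`, so `c_n = k^n`, and weight shell `n` by `2^(-n)`. Since the weight halves from
one shell to the next, the weighted energy balance of a nonnegative bounded solution turns every
transfer `c_n X_n² X_{n+1}` into dissipation, so `∫₀ᵗ ∑ (k/2)^n X_n² X_{n+1}` is finite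
(`flux`). Differentiating the cross functional `∑ 2^(-n) X_n X_{n+1}` and using AM-GM upgrades
this to finiteness of `∫₀ᵗ ∑ (k/2)^n X_n³` (`cube`): the partial sums `Λ_N` satisfy
`Λ_N ≤ A + Λ_{N+2} / (8k²)` and grow at most like `(2k)^N`, which forces them to stay bounded.
For two solutions with the same data, the derivative of `∑_{n ≤ N} 2^(-n) (X_n - Y_n)²`
telescopes, up to a nonpositive term, to a boundary term at shell `N` dominated by the cubes,
whose time integrals tend to `0` as `N → ∞`.
-/

open Set Finset MeasureTheory Filter Topology

namespace DNModel

theorem sum_range_add_le_sum_range {g : ℕ → ℝ} (hg : ∀ i, 0 ≤ g i) (N d : ℕ) :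
    ∑ i ∈ range N, g (i + d) ≤ ∑ i ∈ range (N + d), g i := by
  rw [add_comm N d, sum_range_add]
  simp only [add_comm d]
  exact le_add_of_nonneg_left (sum_nonneg fun i _ => hg i)

theorem sum_half_pow_succ_mul_le {v : ℕ → ℝ} {M : ℝ} (hM : 0 ≤ M) (hv : ∀ i, v i ≤ M)
    (N : ℕ) : ∑ i ∈ range N, (1 / 2 : ℝ) ^ (i + 1) * v i ≤ M :=
  calc ∑ i ∈ range N, (1 / 2 : ℝ) ^ (i + 1) * v i
      ≤ ∑ i ∈ range N, (1 / 2 : ℝ) ^ (i + 1) * M := by gcongr with i; exact hv i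
    _ = 1 / 2 * (∑ i ∈ range N, (1 / 2 : ℝ) ^ i) * M := by
      rw [← sum_mul, mul_sum]; simp only [pow_succ']
    _ ≤ 1 / 2 * 2 * M := by gcongr; exact sum_geometric_two_le N
    _ = M := by ring

theorem le_div_one_sub_of_le_add_mul_shift {Λ : ℕ → ℝ} {A c r G : ℝ} {d : ℕ}
    (hA : 0 ≤ A) (hc : 0 ≤ c) (hc1 : c < 1) (hr : 0 ≤ r) (hcr : c * r ^ d < 1)
    (hrec : ∀ N, Λ N ≤ A + c * Λ (N + d)) (hgrowth : ∀ N, Λ N ≤ r ^ N * G) (N : ℕ) :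
    Λ N ≤ A / (1 - c) := by
  have hiter : ∀ j N, Λ N ≤ A * ∑ i ∈ range j, c ^ i + c ^ j * Λ (N + d * j) := by
    intro j
    induction j with
    | zero => simp
    | succ j ih =>
      intro N
      have h := mul_le_mul_of_nonneg_left (hrec (N + d * j)) (pow_nonneg hc j)
      rw [sum_range_succ, show N + d * (j + 1) = N + d * j + d by ring]
      linear_combination ih N + h
  have hbound : ∀ j, Λ N ≤ A / (1 - c) + r ^ N * G * (c * r ^ d) ^ j := by
    intro j
    have hgeom : ∑ i ∈ range j, c ^ i ≤ 1 / (1 - c) := by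
      simpa using geom_sum_Ico_le_of_lt_one (m := 0) (n := j) hc hc1
    calc Λ N ≤ A * ∑ i ∈ range j, c ^ i + c ^ j * Λ (N + d * j) := hiter j N
      _ ≤ A * (1 / (1 - c)) + c ^ j * (r ^ (N + d * j) * G) := by
        gcongr
        exact hgrowth _
      _ = A / (1 - c) + r ^ N * G * (c * r ^ d) ^ j := by ring
  have hlim : Tendsto (fun j => A / (1 - c) + r ^ N * G * (c * r ^ d) ^ j) atTop
      (𝓝 (A / (1 - c))) := by
    simpa using ((tendsto_pow_atTop_nhds_zero_of_lt_one (by positivity) hcr).const_mul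
      (r ^ N * G)).const_add (A / (1 - c))
  exact ge_of_tendsto' hlim hbound

theorem intervalIntegrable_of_continuousOn_Ici {g : ℝ → ℝ} (hg : ContinuousOn g (Ici 0))
    {t : ℝ} (ht : 0 ≤ t) : IntervalIntegrable g volume 0 t :=
  (hg.mono fun _ hx => (uIcc_of_le ht ▸ hx).1).intervalIntegrable

theorem sub_le_integral_of_hasDerivWithinAt_Ici {F F' φ : ℝ → ℝ} {t : ℝ} (ht : 0 ≤ t)
    (hF : ∀ s, 0 ≤ s → HasDerivWithinAt F (F' s) (Ici 0) s)
    (hφ : IntervalIntegrable φ volume 0 t) (hle : ∀ s, 0 ≤ s → F' s ≤ φ s) :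
    F t - F 0 ≤ ∫ s in 0..t, φ s :=
  intervalIntegral.sub_le_integral_of_hasDeriv_right_of_le ht
    (fun s hs => (hF s hs.1).continuousWithinAt.mono fun _ hx => hx.1)
    (fun s hs => (hF s hs.1.le).mono fun _ hx => hs.1.le.trans hx.le)
    ((intervalIntegrable_iff_integrableOn_Icc_of_le ht).mp hφ) fun s hs => hle s hs.1.le

theorem integral_le_sub_of_hasDerivWithinAt_Ici {F F' φ : ℝ → ℝ} {t : ℝ} (ht : 0 ≤ t)
    (hF : ∀ s, 0 ≤ s → HasDerivWithinAt F (F' s) (Ici 0) s)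
    (hφ : IntervalIntegrable φ volume 0 t) (hle : ∀ s, 0 ≤ s → φ s ≤ F' s) :
    ∫ s in 0..t, φ s ≤ F t - F 0 := by
  have h := sub_le_integral_of_hasDerivWithinAt_Ici ht (fun s hs => (hF s hs).neg) hφ.neg
    fun s hs => neg_le_neg (hle s hs)
  simp only [Pi.neg_apply, intervalIntegral.integral_neg] at h
  linarith

theorem mul_sq_add_mul_mul_mul_le {k a b c : ℝ} (hk : 0 < k) (hb : 0 ≤ b) (hc : 0 ≤ c) :
    a * b ^ 2 + k * a * b * c ≤
      (8 * k + k / 2) * a ^ 2 * b + 4 * k ^ 2 * b ^ 2 * c + b ^ 3 / (32 * k) + c ^ 3 / 64 := by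
  have hab : a * b ^ 2 ≤ 8 * k * a ^ 2 * b + b ^ 3 / (32 * k) := by
    have h : 8 * k * a ^ 2 * b + b ^ 3 / (32 * k) - a * b ^ 2 =
        b * (16 * k * a - b) ^ 2 / (32 * k) := by
      field_simp; ring
    linarith [show 0 ≤ b * (16 * k * a - b) ^ 2 / (32 * k) by positivity]
  have habc : k * a * b * c ≤ k / 2 * a ^ 2 * b + k / 2 * b * c ^ 2 := by
    nlinarith [mul_nonneg (mul_nonneg hk.le hb) (sq_nonneg (a - c))]
  have hbc : k / 2 * b * c ^ 2 ≤ 4 * k ^ 2 * b ^ 2 * c + c ^ 3 / 64 := by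
    nlinarith [mul_nonneg hc (sq_nonneg (16 * k * b - c))]
  linarith

theorem neg_sq_sub_sq_mul_sub_le {x y x' y' : ℝ} (hx : 0 ≤ x) (hy : 0 ≤ y) (hx' : 0 ≤ x')
    (hy' : 0 ≤ y') :
    -((x ^ 2 - y ^ 2) * (x' - y')) ≤ 2 * (x ^ 3 + y ^ 3 + x' ^ 3 + y' ^ 3) := by
  have hyoung : ∀ u v : ℝ, 0 ≤ u → 0 ≤ v → u ^ 2 * v ≤ u ^ 3 + v ^ 3 := by
    intro u v hu hv
    nlinarith [mul_nonneg (by positivity : (0 : ℝ) ≤ 2 * u + v) (sq_nonneg (u - v)),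
      pow_nonneg hv 3]
  nlinarith [hyoung x x' hx hx', hyoung x y' hx hy', hyoung y x' hy hx', hyoung y y' hy hy',
    mul_nonneg (mul_nonneg hx hy) hx', mul_nonneg (mul_nonneg hx hy) hy']

noncomputable def dnField (k : ℝ) (U : ℕ → ℝ → ℝ) (n : ℕ) (s : ℝ) : ℝ :=
  k ^ n * U n s ^ 2 - k ^ (n + 1) * U (n + 1) s * U (n + 2) s

structure IsNonnegBoundedSolution (k f B : ℝ) (U : ℕ → ℝ → ℝ) : Prop where
  apply_zero : ∀ s, U 0 s = f
  hasDerivWithinAt : ∀ n s, 0 ≤ s → HasDerivWithinAt (U (n + 1)) (dnField k U n s) (Ici 0) s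
  nonneg : ∀ n s, 0 ≤ s → 0 ≤ U (n + 1) s
  le_bound : ∀ n s, 0 ≤ s → U (n + 1) s ≤ B

noncomputable def flux (k : ℝ) (U : ℕ → ℝ → ℝ) (n : ℕ) (s : ℝ) : ℝ :=
  (k / 2) ^ n * U n s ^ 2 * U (n + 1) s

noncomputable def cube (k : ℝ) (U : ℕ → ℝ → ℝ) (n : ℕ) (s : ℝ) : ℝ :=
  (k / 2) ^ n * U n s ^ 3

namespace IsNonnegBoundedSolution

variable {k f B : ℝ} {U : ℕ → ℝ → ℝ}

theorem continuousOn (hU : IsNonnegBoundedSolution k f B U) (n : ℕ) :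
    ContinuousOn (U n) (Ici 0) := by
  cases n with
  | zero => simpa only [funext hU.apply_zero] using continuousOn_const
  | succ n => exact fun s hs => (hU.hasDerivWithinAt n s hs).continuousWithinAt

theorem continuousOn_flux (hU : IsNonnegBoundedSolution k f B U) (n : ℕ) :
    ContinuousOn (flux k U n) (Ici 0) :=
  (continuousOn_const.mul ((hU.continuousOn n).pow 2)).mul (hU.continuousOn (n + 1))

theorem continuousOn_cube (hU : IsNonnegBoundedSolution k f B U) (n : ℕ) :
    ContinuousOn (cube k U n) (Ici 0) :=
  continuousOn_const.mul ((hU.continuousOn n).pow 3)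

theorem bound_nonneg (hU : IsNonnegBoundedSolution k f B U) : 0 ≤ B :=
  (hU.nonneg 0 0 le_rfl).trans (hU.le_bound 0 0 le_rfl)

theorem flux_nonneg (hU : IsNonnegBoundedSolution k f B U) (hk : 0 ≤ k) (n : ℕ) {s : ℝ}
    (hs : 0 ≤ s) : 0 ≤ flux k U n s := by
  have := hU.nonneg n s hs
  unfold flux; positivity

theorem cube_succ_nonneg (hU : IsNonnegBoundedSolution k f B U) (hk : 0 ≤ k) (n : ℕ) {s : ℝ}
    (hs : 0 ≤ s) : 0 ≤ cube k U (n + 1) s := by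
  have := hU.nonneg n s hs
  unfold cube; positivity

theorem integral_flux_nonneg (hU : IsNonnegBoundedSolution k f B U) (hk : 0 ≤ k) {t : ℝ}
    (ht : 0 ≤ t) (n : ℕ) : 0 ≤ ∫ s in 0..t, flux k U n s :=
  intervalIntegral.integral_nonneg ht fun _ hs => hU.flux_nonneg hk n hs.1

theorem integral_cube_nonneg (hU : IsNonnegBoundedSolution k f B U) (hk : 0 ≤ k) {t : ℝ}
    (ht : 0 ≤ t) (n : ℕ) : 0 ≤ ∫ s in 0..t, cube k U (n + 1) s :=
  intervalIntegral.integral_nonneg ht fun _ hs => hU.cube_succ_nonneg hk n hs.1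

theorem hasDerivWithinAt_energy (hU : IsNonnegBoundedSolution k f B U) (n : ℕ) {s : ℝ}
    (hs : 0 ≤ s) :
    HasDerivWithinAt (fun τ => (1 / 2 : ℝ) ^ (n + 1) * U (n + 1) τ ^ 2)
      (flux k U n s - 2 * flux k U (n + 1) s) (Ici 0) s := by
  refine (((hU.hasDerivWithinAt n s hs).fun_pow 2).const_mul _).congr_deriv ?_
  unfold dnField flux
  ring

theorem sum_integral_flux_le (hU : IsNonnegBoundedSolution k f B U) (hk : 0 ≤ k) {t : ℝ}
    (ht : 0 ≤ t) (N : ℕ) :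
    ∑ i ∈ range N, ∫ s in 0..t, flux k U (i + 1) s ≤
      (∫ s in 0..t, flux k U 0 s) + B ^ 2 := by
  have hflux := hU.continuousOn_flux
  have hbalance : ∀ i, (1 / 2 : ℝ) ^ (i + 1) * U (i + 1) t ^ 2
      - (1 / 2 : ℝ) ^ (i + 1) * U (i + 1) 0 ^ 2 ≤
        (∫ s in 0..t, flux k U i s) - 2 * ∫ s in 0..t, flux k U (i + 1) s := fun i => by
    have h := sub_le_integral_of_hasDerivWithinAt_Ici ht
      (fun s hs => hU.hasDerivWithinAt_energy i hs)
      (intervalIntegrable_of_continuousOn_Ici (by fun_prop) ht) fun s _ => le_rfl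
    simpa (disch := exact intervalIntegrable_of_continuousOn_Ici (by fun_prop) ht) only
      [intervalIntegral.integral_sub, intervalIntegral.integral_const_mul] using h
  have hsum := sum_le_sum fun i (_ : i ∈ range N) => hbalance i
  rw [sum_sub_distrib, sum_sub_distrib, ← mul_sum] at hsum
  have htelescope := (sum_range_succ (fun n => ∫ s in 0..t, flux k U n s) N).symm.trans
    (sum_range_succ' (fun n => ∫ s in 0..t, flux k U n s) N)
  have hend : 0 ≤ ∑ i ∈ range N, (1 / 2 : ℝ) ^ (i + 1) * U (i + 1) t ^ 2 :=
    sum_nonneg fun i _ => by positivity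
  have hstart := sum_half_pow_succ_mul_le (sq_nonneg B)
    (fun i => pow_le_pow_left₀ (hU.nonneg i 0 le_rfl) (hU.le_bound i 0 le_rfl) 2) N
  linarith [hU.integral_flux_nonneg hk ht N]

theorem hasDerivWithinAt_cross (hU : IsNonnegBoundedSolution k f B U) (n : ℕ) {s : ℝ}
    (hs : 0 ≤ s) :
    HasDerivWithinAt (fun τ => (1 / 2 : ℝ) ^ (n + 1) * (U (n + 1) τ * U (n + 2) τ))
      ((1 / 2 : ℝ) ^ (n + 1) *
        (dnField k U n s * U (n + 2) s + U (n + 1) s * dnField k U (n + 1) s)) (Ici 0) s :=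
  ((hU.hasDerivWithinAt n s hs).fun_mul (hU.hasDerivWithinAt (n + 1) s hs)).const_mul _

theorem cube_sub_le_deriv_cross (hU : IsNonnegBoundedSolution k f B U) (hk : 0 < k) (n : ℕ)
    {s : ℝ} (hs : 0 ≤ s) :
    cube k U (n + 1) s - (8 * k + k / 2) * flux k U (n + 1) s - 8 * k * flux k U (n + 2) s
        - (cube k U (n + 2) s + cube k U (n + 3) s) / (16 * k ^ 2) ≤
      (1 / 2 : ℝ) ^ (n + 1) *
        (dnField k U n s * U (n + 2) s + U (n + 1) s * dnField k U (n + 1) s) := by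
  have hamgm := mul_le_mul_of_nonneg_left
    (mul_sq_add_mul_mul_mul_le (a := U (n + 1) s) hk (hU.nonneg (n + 1) s hs)
      (hU.nonneg (n + 2) s hs)) (pow_nonneg (div_nonneg hk.le zero_le_two) (n + 1))
  have hforcing : 0 ≤ (1 / 2 : ℝ) ^ (n + 1) * k ^ n * U n s ^ 2 * U (n + 2) s := by
    have := hU.nonneg (n + 1) s hs
    positivity
  have hk0 : k ≠ 0 := hk.ne'
  have hcube2 : cube k U (n + 2) s / (16 * k ^ 2) =
      (k / 2) ^ (n + 1) * (U (n + 2) s ^ 3 / (32 * k)) := by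
    unfold cube; field_simp; ring
  have hcube3 : cube k U (n + 3) s / (16 * k ^ 2) = (k / 2) ^ (n + 1) * (U (n + 3) s ^ 3 / 64) := by
    unfold cube; field_simp; ring
  rw [add_div, hcube2, hcube3]
  unfold dnField cube flux
  linear_combination hamgm + hforcing

theorem integral_cube_sub_le (hU : IsNonnegBoundedSolution k f B U) (hk : 0 < k) {t : ℝ}
    (ht : 0 ≤ t) (n : ℕ) :
    (∫ s in 0..t, cube k U (n + 1) s) - (8 * k + k / 2) * (∫ s in 0..t, flux k U (n + 1) s)
        - 8 * k * (∫ s in 0..t, flux k U (n + 2) s)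
        - ((∫ s in 0..t, cube k U (n + 2) s) + ∫ s in 0..t, cube k U (n + 3) s)
          / (16 * k ^ 2) ≤
      (1 / 2 : ℝ) ^ (n + 1) * (U (n + 1) t * U (n + 2) t)
        - (1 / 2 : ℝ) ^ (n + 1) * (U (n + 1) 0 * U (n + 2) 0) := by
  have hflux := hU.continuousOn_flux
  have hcube := hU.continuousOn_cube
  have h := integral_le_sub_of_hasDerivWithinAt_Ici ht (fun s hs => hU.hasDerivWithinAt_cross n hs)
    (intervalIntegrable_of_continuousOn_Ici (by fun_prop) ht)
    fun s hs => hU.cube_sub_le_deriv_cross hk n hs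
  simpa (disch := exact intervalIntegrable_of_continuousOn_Ici (by fun_prop) ht) only
    [intervalIntegral.integral_sub, intervalIntegral.integral_add,
      intervalIntegral.integral_const_mul, intervalIntegral.integral_div] using h

theorem sum_integral_cube_le_add (hU : IsNonnegBoundedSolution k f B U) (hk : 1 ≤ k) {t : ℝ}
    (ht : 0 ≤ t) (N : ℕ) :
    ∑ i ∈ range N, ∫ s in 0..t, cube k U (i + 1) s ≤
      B ^ 2 + (16 * k + k / 2) * ((∫ s in 0..t, flux k U 0 s) + B ^ 2)
        + 1 / (8 * k ^ 2) * ∑ i ∈ range (N + 2), ∫ s in 0..t, cube k U (i + 1) s := by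
  have hk0 : 0 < k := one_pos.trans_le hk
  set L : ℕ → ℝ := fun n => ∫ s in 0..t, cube k U (n + 1) s
  set P : ℕ → ℝ := fun n => ∫ s in 0..t, flux k U (n + 1) s
  set Q := (∫ s in 0..t, flux k U 0 s) + B ^ 2
  have hL : ∀ n, 0 ≤ L n := hU.integral_cube_nonneg hk0.le ht
  have hP : ∀ n, 0 ≤ P n := fun n => hU.integral_flux_nonneg hk0.le ht (n + 1)
  have hsum := sum_le_sum fun i (_ : i ∈ range N) => hU.integral_cube_sub_le hk0 ht i
  simp only [sum_sub_distrib, ← mul_sum, ← sum_div, sum_add_distrib] at hsum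
  have hcross := sum_half_pow_succ_mul_le (sq_nonneg B)
    (fun i => (mul_le_mul (hU.le_bound i t ht) (hU.le_bound (i + 1) t ht) (hU.nonneg (i + 1) t ht)
      hU.bound_nonneg).trans_eq (sq B).symm) N
  have hcross0 : 0 ≤ ∑ i ∈ range N, (1 / 2 : ℝ) ^ (i + 1) * (U (i + 1) 0 * U (i + 2) 0) :=
    sum_nonneg fun i _ => mul_nonneg (by positivity)
      (mul_nonneg (hU.nonneg i 0 le_rfl) (hU.nonneg (i + 1) 0 le_rfl))
  have hP1 : ∑ i ∈ range N, P i ≤ Q := hU.sum_integral_flux_le hk0.le ht N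
  have hP2 : ∑ i ∈ range N, P (i + 1) ≤ Q :=
    (sum_range_add_le_sum_range hP N 1).trans (hU.sum_integral_flux_le hk0.le ht (N + 1))
  have hL1 : ∑ i ∈ range N, L (i + 1) ≤ ∑ i ∈ range (N + 2), L i :=
    (sum_range_add_le_sum_range hL N 1).trans
      (sum_le_sum_of_subset_of_nonneg (range_subset_range.mpr (by omega)) fun i _ _ => hL i)
  have hL2 : ∑ i ∈ range N, L (i + 2) ≤ ∑ i ∈ range (N + 2), L i :=
    sum_range_add_le_sum_range hL N 2
  have hc : 0 < 16 * k ^ 2 := by positivity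
  have hLdiv : (∑ i ∈ range N, L (i + 1) + ∑ i ∈ range N, L (i + 2)) / (16 * k ^ 2) ≤
      1 / (8 * k ^ 2) * ∑ i ∈ range (N + 2), L i := by
    rw [div_le_iff₀ hc]; field_simp; linarith
  linarith [mul_le_mul_of_nonneg_left hP1 (by positivity : (0 : ℝ) ≤ 8 * k + k / 2),
    mul_le_mul_of_nonneg_left hP2 (by positivity : (0 : ℝ) ≤ 8 * k)]

theorem sum_integral_cube_le_pow (hU : IsNonnegBoundedSolution k f B U) (hk : 1 ≤ k) {t : ℝ}
    (ht : 0 ≤ t) (N : ℕ) :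
    ∑ i ∈ range N, ∫ s in 0..t, cube k U (i + 1) s ≤ (2 * k) ^ N * (B ^ 3 * t) := by
  have hk0 : 0 ≤ k := zero_le_one.trans hk
  have hterm : ∀ i ∈ range N, ∫ s in 0..t, cube k U (i + 1) s ≤ k ^ N * (B ^ 3 * t) := by
    intro i hi
    have hpow : (k / 2) ^ (i + 1) ≤ k ^ N :=
      (pow_le_pow_left₀ (by positivity) (by linarith) _).trans
        (pow_le_pow_right₀ hk (mem_range.mp hi))
    have hcube : ∀ s ∈ Icc 0 t, cube k U (i + 1) s ≤ k ^ N * B ^ 3 := fun s hs =>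
      mul_le_mul hpow (pow_le_pow_left₀ (hU.nonneg i s hs.1) (hU.le_bound i s hs.1) 3)
        (pow_nonneg (hU.nonneg i s hs.1) 3) (pow_nonneg hk0 N)
    calc ∫ s in 0..t, cube k U (i + 1) s ≤ ∫ _ in 0..t, k ^ N * B ^ 3 :=
          intervalIntegral.integral_mono_on ht
            (intervalIntegrable_of_continuousOn_Ici (hU.continuousOn_cube _) ht)
            intervalIntegrable_const hcube
      _ = k ^ N * (B ^ 3 * t) := by rw [intervalIntegral.integral_const, smul_eq_mul]; ring
  calc ∑ i ∈ range N, ∫ s in 0..t, cube k U (i + 1) s ≤ N * (k ^ N * (B ^ 3 * t)) := by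
        simpa using sum_le_card_nsmul _ _ _ hterm
    _ ≤ 2 ^ N * (k ^ N * (B ^ 3 * t)) := by
        have := hU.bound_nonneg
        gcongr
        exact_mod_cast Nat.lt_two_pow_self.le
    _ = (2 * k) ^ N * (B ^ 3 * t) := by ring

theorem summable_integral_cube (hU : IsNonnegBoundedSolution k f B U) (hk : 1 ≤ k) {t : ℝ}
    (ht : 0 ≤ t) : Summable fun n => ∫ s in 0..t, cube k U n s := by
  have hk0 : 0 < k := one_pos.trans_le hk
  have hc : 1 / (8 * k ^ 2) < 1 := by
    rw [div_lt_one (by positivity)]; nlinarith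
  have hcr : 1 / (8 * k ^ 2) * (2 * k) ^ 2 < 1 := by
    field_simp; norm_num
  have hA : 0 ≤ B ^ 2 + (16 * k + k / 2) * ((∫ s in 0..t, flux k U 0 s) + B ^ 2) := by
    have := hU.integral_flux_nonneg hk0.le ht 0
    positivity
  exact (summable_nat_add_iff 1).mp (summable_of_sum_range_le (hU.integral_cube_nonneg hk0.le ht)
    (le_div_one_sub_of_le_add_mul_shift hA (by positivity) hc (by positivity) hcr
      (hU.sum_integral_cube_le_add hk ht) (hU.sum_integral_cube_le_pow hk ht)))

end IsNonnegBoundedSolution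

noncomputable def distance (X Y : ℕ → ℝ → ℝ) (N : ℕ) (s : ℝ) : ℝ :=
  ∑ i ∈ range N, (1 / 2 : ℝ) ^ (i + 1) * (X (i + 1) s - Y (i + 1) s) ^ 2

noncomputable def transfer (k : ℝ) (X Y : ℕ → ℝ → ℝ) (n : ℕ) (s : ℝ) : ℝ :=
  (k / 2) ^ n * (X n s ^ 2 - Y n s ^ 2) * (X (n + 1) s - Y (n + 1) s)

section Uniqueness

variable {k f B B' : ℝ} {X Y : ℕ → ℝ → ℝ}

theorem hasDerivWithinAt_distance (hX : IsNonnegBoundedSolution k f B X)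
    (hY : IsNonnegBoundedSolution k f B' Y) (N : ℕ) {s : ℝ} (hs : 0 ≤ s) :
    HasDerivWithinAt (distance X Y N)
      (∑ i ∈ range N, (transfer k X Y i s - transfer k X Y (i + 1) s
        - (k / 2) ^ (i + 1) * (X (i + 2) s + Y (i + 2) s) * (X (i + 1) s - Y (i + 1) s) ^ 2))
      (Ici 0) s := by
  unfold distance
  refine HasDerivWithinAt.fun_sum fun i _ => ?_
  refine ((((hX.hasDerivWithinAt i s hs).fun_sub (hY.hasDerivWithinAt i s hs)).fun_pow 2).const_mul
    _).congr_deriv ?_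
  unfold dnField transfer
  ring

theorem neg_transfer_le (hX : IsNonnegBoundedSolution k f B X)
    (hY : IsNonnegBoundedSolution k f B' Y) (hk : 1 ≤ k) (n : ℕ) {s : ℝ} (hs : 0 ≤ s) :
    -transfer k X Y (n + 1) s ≤
      4 * (cube k X (n + 1) s + cube k Y (n + 1) s + cube k X (n + 2) s + cube k Y (n + 2) s) := by
  have hk0 : 0 ≤ k := zero_le_one.trans hk
  have hx : 0 ≤ X (n + 2) s := hX.nonneg (n + 1) s hs
  have hy : 0 ≤ Y (n + 2) s := hY.nonneg (n + 1) s hs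
  have h := mul_le_mul_of_nonneg_left (neg_sq_sub_sq_mul_sub_le (hX.nonneg n s hs)
    (hY.nonneg n s hs) hx hy) (pow_nonneg (div_nonneg hk0 zero_le_two) (n + 1))
  have hshift : (k / 2) ^ (n + 1) ≤ 2 * (k / 2) ^ (n + 2) := by
    rw [pow_succ _ (n + 1)]
    nlinarith [pow_nonneg (div_nonneg hk0 zero_le_two) (n + 1)]
  have hcX := hX.cube_succ_nonneg hk0 n hs
  have hcY := hY.cube_succ_nonneg hk0 n hs
  unfold transfer cube at *
  rw [show n + 1 + 1 = n + 2 from rfl]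
  linarith [mul_le_mul_of_nonneg_right hshift (add_nonneg (pow_nonneg hx 3) (pow_nonneg hy 3))]

theorem distance_le (hX : IsNonnegBoundedSolution k f B X)
    (hY : IsNonnegBoundedSolution k f B' Y) (hk : 1 ≤ k)
    (hinit : ∀ n, X (n + 1) 0 = Y (n + 1) 0) {t : ℝ} (ht : 0 ≤ t) (N : ℕ) :
    distance X Y (N + 1) t ≤
      4 * ((∫ s in 0..t, cube k X (N + 1) s) + (∫ s in 0..t, cube k Y (N + 1) s)
        + (∫ s in 0..t, cube k X (N + 2) s) + ∫ s in 0..t, cube k Y (N + 2) s) := by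
  have hcX := hX.continuousOn_cube
  have hcY := hY.continuousOn_cube
  have h := sub_le_integral_of_hasDerivWithinAt_Ici ht
    (φ := fun s => 4 * (cube k X (N + 1) s + cube k Y (N + 1) s + cube k X (N + 2) s
      + cube k Y (N + 2) s))
    (fun s hs => hasDerivWithinAt_distance hX hY (N + 1) hs)
    (intervalIntegrable_of_continuousOn_Ici (by fun_prop) ht) fun s hs => by
      have hdissipation : ∀ i ∈ range (N + 1),
          0 ≤ (k / 2) ^ (i + 1) * (X (i + 2) s + Y (i + 2) s)
            * (X (i + 1) s - Y (i + 1) s) ^ 2 := by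
        intro i _
        have := hX.nonneg (i + 1) s hs
        have := hY.nonneg (i + 1) s hs
        have : 0 ≤ k := zero_le_one.trans hk
        positivity
      have htransfer0 : transfer k X Y 0 s = 0 := by
        simp [transfer, hX.apply_zero, hY.apply_zero]
      rw [sum_sub_distrib, sum_range_sub', htransfer0]
      linarith [sum_nonneg hdissipation, neg_transfer_le hX hY hk N hs]
  have hdistance0 : distance X Y (N + 1) 0 = 0 := by simp [distance, hinit]
  rw [hdistance0, sub_zero] at h
  simpa (disch := exact intervalIntegrable_of_continuousOn_Ici (by fun_prop) ht) only
    [intervalIntegral.integral_add, intervalIntegral.integral_const_mul] using h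

theorem eq_of_apply_zero_eq (hX : IsNonnegBoundedSolution k f B X)
    (hY : IsNonnegBoundedSolution k f B' Y) (hk : 1 ≤ k)
    (hinit : ∀ n, X (n + 1) 0 = Y (n + 1) 0) (n : ℕ) {t : ℝ} (ht : 0 ≤ t) :
    X (n + 1) t = Y (n + 1) t := by
  have hvanish : ∀ {Z : ℕ → ℝ → ℝ} {C : ℝ}, IsNonnegBoundedSolution k f C Z → ∀ d,
      Tendsto (fun N => ∫ s in 0..t, cube k Z (N + d) s) atTop (𝓝 0) := fun hZ d =>
    ((summable_nat_add_iff d).mpr (hZ.summable_integral_cube hk ht)).tendsto_atTop_zero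
  have hbound := (((((hvanish hX 1).add (hvanish hY 1)).add (hvanish hX 2)).add
    (hvanish hY 2)).const_mul 4)
  simp only [add_zero, mul_zero] at hbound
  have hterm : ∀ N, n ≤ N →
      (1 / 2 : ℝ) ^ (n + 1) * (X (n + 1) t - Y (n + 1) t) ^ 2 ≤ distance X Y (N + 1) t :=
    fun N hN => single_le_sum
      (f := fun i => (1 / 2 : ℝ) ^ (i + 1) * (X (i + 1) t - Y (i + 1) t) ^ 2)
      (fun i _ => by positivity) (mem_range.mpr (Nat.lt_succ_of_le hN))
  have hle : (1 / 2 : ℝ) ^ (n + 1) * (X (n + 1) t - Y (n + 1) t) ^ 2 ≤ 0 :=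
    ge_of_tendsto hbound (eventually_atTop.mpr ⟨n, fun N hN =>
      (hterm N hN).trans (distance_le hX hY hk hinit ht N)⟩)
  have hsq : (X (n + 1) t - Y (n + 1) t) ^ 2 = 0 :=
    le_antisymm (nonpos_of_mul_nonpos_right hle (by positivity)) (sq_nonneg _)
  exact sub_eq_zero.mp (pow_eq_zero_iff two_ne_zero |>.mp hsq)

end Uniqueness

end DNModel

namespace Stmt9

open DNModel

theorem isNonnegBoundedSolution_of_leray {α f : ℝ} {X : ℕ → ℝ → ℝ}
    (hX0 : ∀ t, X 0 t = f)
    (hX : ∀ n : ℕ, 1 ≤ n → ∀ t ∈ Ici (0 : ℝ),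
      HasDerivWithinAt (X n)
        ((2 : ℝ) ^ (α * ((n : ℝ) - 1)) * (X (n - 1) t) ^ 2
          - (2 : ℝ) ^ (α * (n : ℝ)) * X n t * X (n + 1) t) (Ici 0) t)
    (hXpos : ∀ n : ℕ, 1 ≤ n → ∀ t ∈ Ici (0 : ℝ), 0 ≤ X n t) {M : ℝ}
    (hXleray : ∀ t ∈ Ici (0 : ℝ),
      (Summable fun n => (X (n + 1) t) ^ 2) ∧ (∑' n, (X (n + 1) t) ^ 2) ≤ M) :
    IsNonnegBoundedSolution ((2 : ℝ) ^ α) f √M X where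
  apply_zero := hX0
  hasDerivWithinAt n s hs := by
    have hpow : ∀ m : ℕ, (2 : ℝ) ^ (α * m) = ((2 : ℝ) ^ α) ^ m := fun m => by
      rw [Real.rpow_mul zero_le_two, Real.rpow_natCast]
    have hshift : α * (((n + 1 : ℕ) : ℝ) - 1) = α * (n : ℕ) := by push_cast; ring
    have h := hX (n + 1) (Nat.le_add_left 1 n) s hs
    rwa [hshift, hpow, hpow, Nat.add_sub_cancel] at h
  nonneg n s hs := hXpos (n + 1) (Nat.le_add_left 1 n) s hs
  le_bound n s hs := (le_abs_self _).trans (Real.abs_le_sqrt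
    (((hXleray s hs).1.le_tsum n fun j _ => sq_nonneg _).trans (hXleray s hs).2))

theorem nonneg_leray_uniqueness (α f : ℝ) (hα : 0 < α)
    (X Y : ℕ → ℝ → ℝ)
    (hX0 : ∀ t, X 0 t = f) (hY0 : ∀ t, Y 0 t = f)
    (hX : ∀ n : ℕ, 1 ≤ n → ∀ t ∈ Ici (0 : ℝ),
      HasDerivWithinAt (X n)
        ((2 : ℝ) ^ (α * ((n : ℝ) - 1)) * (X (n - 1) t) ^ 2
          - (2 : ℝ) ^ (α * (n : ℝ)) * X n t * X (n + 1) t) (Ici 0) t)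
    (hY : ∀ n : ℕ, 1 ≤ n → ∀ t ∈ Ici (0 : ℝ),
      HasDerivWithinAt (Y n)
        ((2 : ℝ) ^ (α * ((n : ℝ) - 1)) * (Y (n - 1) t) ^ 2
          - (2 : ℝ) ^ (α * (n : ℝ)) * Y n t * Y (n + 1) t) (Ici 0) t)
    (hXpos : ∀ n : ℕ, 1 ≤ n → ∀ t ∈ Ici (0 : ℝ), 0 ≤ X n t)
    (hYpos : ∀ n : ℕ, 1 ≤ n → ∀ t ∈ Ici (0 : ℝ), 0 ≤ Y n t)
    (hXleray : ∃ M : ℝ, ∀ t ∈ Ici (0 : ℝ),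
      (Summable fun n => (X (n + 1) t) ^ 2) ∧ (∑' n, (X (n + 1) t) ^ 2) ≤ M)
    (hYleray : ∃ M : ℝ, ∀ t ∈ Ici (0 : ℝ),
      (Summable fun n => (Y (n + 1) t) ^ 2) ∧ (∑' n, (Y (n + 1) t) ^ 2) ≤ M)
    (hinit : ∀ n : ℕ, 1 ≤ n → X n 0 = Y n 0) :
    ∀ n : ℕ, 1 ≤ n → ∀ t ∈ Ici (0 : ℝ), X n t = Y n t := by
  obtain ⟨MX, hMX⟩ := hXleray
  obtain ⟨MY, hMY⟩ := hYleray
  have hk : 1 ≤ (2 : ℝ) ^ α := Real.one_le_rpow one_le_two hα.le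
  intro n hn t ht
  obtain ⟨m, rfl⟩ := Nat.exists_eq_add_of_le' hn
  exact eq_of_apply_zero_eq (isNonnegBoundedSolution_of_leray hX0 hX hXpos hMX)
    (isNonnegBoundedSolution_of_leray hY0 hY hYpos hMY) hk
    (fun i => hinit (i + 1) (Nat.le_add_left 1 i)) m ht

end Stmt9
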